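/- Let G be a finite group with normal subgroups G₁, …, Gₙ such that [G_i, G_j] = 1 for i ≠ j and G = G₁⋯Gₙ. If for each i a pronormal subgroup H_i of G_i is chosen and H = ⟨H₁, …, Hₙ⟩, then H is pronormal in G. -/

import Mathlib

/-- The conjugate subgroup `g H g⁻¹`. -/
def conjSub {G : Type*} [Group G] (g : G) (H : Subgroup G) : Subgroup G :=
  H.map (MulAut.conj g).toMonoidHom

/-- `H` is pronormal in `G`: for every `g`, `H` and `H^g` are conjugate in `⟨H, H^g⟩`. -/
def IsPronormal {G : Type*} [Group G] (H : Subgroup G) : Prop :=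
  ∀ g : G, ∃ x ∈ H ⊔ conjSub g H, conjSub x H = conjSub g H

/-- `n` is a `π`-number: all its prime divisors lie in `π`. -/
def IsPiNumber (π : Set ℕ) (n : ℕ) : Prop :=
  ∀ p : ℕ, p.Prime → p ∣ n → p ∈ π

/-- `n` is a `π'`-number: none of its prime divisors lies in `π`. -/
def IsPiPrimeNumber (π : Set ℕ) (n : ℕ) : Prop :=
  ∀ p : ℕ, p.Prime → p ∣ n → p ∉ π

/-- `H` is a `π`-Hall subgroup: its order is a `π`-number and its index a `π'`-number. -/
def IsHall {G : Type*} [Group G] (π : Set ℕ) (H : Subgroup G) : Prop :=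
  IsPiNumber π (Nat.card H) ∧ IsPiPrimeNumber π H.index

/-- A group is `π`-separable if it has a normal series each of whose factors is a
`π`-group or a `π'`-group. -/
def IsPiSeparable (π : Set ℕ) (G : Type*) [Group G] : Prop :=
  ∃ n : ℕ, ∃ s : Fin (n + 1) → Subgroup G,
    Monotone s ∧ s 0 = ⊥ ∧ s (Fin.last n) = ⊤ ∧
    (∀ i, (s i).Normal) ∧
    ∀ i : Fin n,
      IsPiNumber π (Nat.card (s i.succ) / Nat.card (s i.castSucc)) ∨
      IsPiPrimeNumber π (Nat.card (s i.succ) / Nat.card (s i.castSucc))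

/-- The `A`-conjugacy class `{H^a : a ∈ A}` of a subgroup `H`. -/
def conjClassOn {G : Type*} [Group G] (A : Subgroup G) (H : Subgroup G) : Set (Subgroup G) :=
  {K | ∃ a ∈ A, K = conjSub a H}

/-- The `G`-conjugacy class `{H^g : g ∈ G}` of a subgroup `H`. -/
def conjClass {G : Type*} [Group G] (H : Subgroup G) : Set (Subgroup G) :=
  {K | ∃ g : G, K = conjSub g H}
section Aux

variable {G : Type*} [Group G]

lemma conjSub_mul (a b : G) (H : Subgroup G) :
    conjSub (a * b) H = conjSub a (conjSub b H) := by
  unfold conjSub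
  rw [Subgroup.map_map]
  congr 1
  ext x
  simp [mul_assoc]

lemma conjSub_mono (g : G) {H K : Subgroup G} (h : H ≤ K) : conjSub g H ≤ conjSub g K :=
  Subgroup.map_mono h

lemma conjSub_iSup {ι : Sort*} (g : G) (H : ι → Subgroup G) :
    conjSub g (⨆ i, H i) = ⨆ i, conjSub g (H i) :=
  Subgroup.map_iSup _ _

lemma conjSub_eq_self {c : G} {H : Subgroup G} (h : ∀ x ∈ H, Commute c x) :
    conjSub c H = H := by
  ext x
  simp only [conjSub, Subgroup.mem_map, MulEquiv.toMonoidHom_eq_coe,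
    MonoidHom.coe_coe, MulAut.conj_apply]
  constructor
  · rintro ⟨y, hy, rfl⟩
    rw [(h y hy).eq, mul_assoc, mul_inv_cancel, mul_one]
    exact hy
  · intro hx
    exact ⟨x, hx, by rw [(h x hx).eq, mul_assoc, mul_inv_cancel, mul_one]⟩

lemma conjSub_le {g : G} {H N : Subgroup G} (hg : g ∈ N) (hH : H ≤ N) : conjSub g H ≤ N := by
  rintro x ⟨y, hy, rfl⟩
  exact N.mul_mem (N.mul_mem hg (hH hy)) (N.inv_mem hg)

lemma conjSub_subgroupOf {N K : Subgroup G} (hK : K ≤ N) (x : N) :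
    conjSub x (K.subgroupOf N) = (conjSub (x : G) K).subgroupOf N := by
  ext z
  simp only [conjSub, Subgroup.mem_subgroupOf, Subgroup.mem_map,
    MulEquiv.toMonoidHom_eq_coe, MonoidHom.coe_coe, MulAut.conj_apply]
  constructor
  · rintro ⟨k, hk, rfl⟩
    exact ⟨(k : G), hk, rfl⟩
  · rintro ⟨w, hw, hwz⟩
    refine ⟨⟨w, hK hw⟩, hw, ?_⟩
    ext
    exact hwz

end Aux



theorem stmt_8 {G : Type*} [Group G] [Finite G] (n : ℕ)
    (Gs : Fin n → Subgroup G) (hnorm : ∀ i, (Gs i).Normal)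
    (hcomm : ∀ i j, i ≠ j → ⁅Gs i, Gs j⁆ = ⊥)
    (hgen : (⨆ i, Gs i) = ⊤)
    (Hs : Fin n → Subgroup G) (hle : ∀ i, Hs i ≤ Gs i)
    (hprn : ∀ i, IsPronormal ((Hs i).subgroupOf (Gs i))) :
    IsPronormal (⨆ i, Hs i) := by
  classical
  have hc : ∀ i j, i ≠ j → ∀ x ∈ Gs i, ∀ y ∈ Gs j, Commute x y := by
    intro i j hij x hx y hy
    have h1 := Subgroup.commutator_mem_commutator hx hy
    rw [hcomm i j hij, Subgroup.mem_bot] at h1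
    exact commutatorElement_eq_one_iff_commute.mp h1
  have hcomm' : Pairwise fun i j => ∀ x y : G, x ∈ Gs i → y ∈ Gs j → Commute x y :=
    fun i j hij x y hx hy => hc i j hij x hx y hy
  -- key: conjugating K ≤ Gs i by a full product equals conjugating by i-th factor
  have key : ∀ (y : ∀ i, G) (hy : ∀ i, y i ∈ Gs i) (comm) (i : Fin n) (K : Subgroup G),
      K ≤ Gs i → conjSub (Finset.univ.noncommProd y comm) K = conjSub (y i) K := by
    intro y hy comm i K hK
    rw [← Finset.mul_noncommProd_erase Finset.univ (Finset.mem_univ i) y comm, conjSub_mul]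
    congr 1
    apply conjSub_eq_self
    intro h hh
    refine (Finset.noncommProd_commute _ _ _ _ ?_).symm
    intro j hj
    exact (hc i j (Finset.ne_of_mem_erase hj).symm h (hK hh) (y j) (hy j))
  intro g
  obtain ⟨f, hf⟩ : ∃ f : ∀ i, Gs i, Subgroup.noncommPiCoprod hcomm' f = g :=
    show g ∈ (Subgroup.noncommPiCoprod hcomm').range by
      rw [Subgroup.noncommPiCoprod_range, hgen]; trivial
  have hprod : Finset.univ.noncommProd (fun i => (f i : G))
      (fun a _ b _ hab => hc a b hab _ (f a).2 _ (f b).2) = g := by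
    rw [← hf]
    rfl
  -- pronormal choices
  choose x hxmem hxconj using fun i => hprn i (f i)
  -- transfer conjSub across subgroupOf
  have hconjle : ∀ i (w : Gs i), conjSub (w : G) (Hs i) ≤ Gs i :=
    fun i w => conjSub_le w.2 (hle i)
  have htrans : ∀ i (w : Gs i), conjSub w ((Hs i).subgroupOf (Gs i))
      = (conjSub (w : G) (Hs i)).subgroupOf (Gs i) :=
    fun i w => conjSub_subgroupOf (hle i) w
  have hxeq : ∀ i, conjSub ((x i : G)) (Hs i) = conjSub ((f i : G)) (Hs i) := by
    intro i
    have := hxconj i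
    rw [htrans i (x i), htrans i (f i)] at this
    have hmap := congrArg (fun S => Subgroup.map (Gs i).subtype S) this
    simpa [Subgroup.subgroupOf_map_subtype, inf_eq_left.mpr (hconjle i (x i)),
      inf_eq_left.mpr (hconjle i (f i))] using hmap
  have hgi : ∀ i, conjSub g (Hs i) = conjSub ((f i : G)) (Hs i) := by
    intro i
    rw [← hprod]
    exact key _ (fun j => (f j).2) _ i (Hs i) (hle i)
  -- the conjugating element
  set z : G := Finset.univ.noncommProd (fun i => (x i : G))
      (fun a _ b _ hab => hc a b hab _ (x a).2 _ (x b).2) with hz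
  refine ⟨z, ?_, ?_⟩
  · apply Subgroup.noncommProd_mem
    intro i _
    have h1 : (x i : G) ∈ Hs i ⊔ conjSub ((f i : G)) (Hs i) := by
      have := hxmem i
      rw [htrans i (f i)] at this
      have : x i ∈ (Hs i ⊔ conjSub ((f i : G)) (Hs i)).subgroupOf (Gs i) := by
        refine (sup_le (Subgroup.comap_mono le_sup_left)
          (Subgroup.comap_mono le_sup_right) : _ ≤ _) this
      exact this
    have h2 : Hs i ⊔ conjSub ((f i : G)) (Hs i) ≤ (⨆ j, Hs j) ⊔ conjSub g (⨆ j, Hs j) := by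
      apply sup_le_sup (le_iSup Hs i)
      rw [← hgi i]
      exact conjSub_mono g (le_iSup Hs i)
    exact h2 h1
  · rw [conjSub_iSup, conjSub_iSup]
    refine iSup_congr fun i => ?_
    refine (key (fun j => (x j : G)) (fun j => (x j).2) _ i (Hs i) (hle i)).trans ?_
    rw [hxeq i, ← hgi i]
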